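/- lim_{n→∞} S(K_{1,n−1})/log₂(n−1) = 1/2, i.e., the entropy of the star on n vertices is asymptotically half the entropy of the complete graph K_n. -/

import Mathlib

open Finset Matrix

variable {V : Type*}

/-- The degree sum `d_G = Tr(Δ(G)) = 2|E(G)|` of a graph. -/
def degreeSum [Fintype V] (G : SimpleGraph V) [DecidableRel G.Adj] : ℕ :=
  ∑ v : V, G.degree v

/-- The density matrix `ρ_G = L(G)/d_G` of a graph. -/
noncomputable def densityMatrix [Fintype V] [DecidableEq V]
    (G : SimpleGraph V) [DecidableRel G.Adj] : Matrix V V ℝ :=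
  ((degreeSum G : ℝ))⁻¹ • G.lapMatrix ℝ

/-- The von Neumann entropy `-∑ λᵢ log₂ λᵢ` of a (hermitian) matrix, computed
from its eigenvalues; the convention `0 log₂ 0 = 0` holds since `Real.logb 2 0 = 0`. -/
noncomputable def matEntropy [Fintype V] [DecidableEq V] (ρ : Matrix V V ℝ) : ℝ :=
  if h : ρ.IsHermitian then -∑ i : V, h.eigenvalues i * Real.logb 2 (h.eigenvalues i) else 0

/-- The von Neumann entropy `S(G)` of a graph. -/
noncomputable def graphEntropy [Fintype V] [DecidableEq V]
    (G : SimpleGraph V) [DecidableRel G.Adj] : ℝ :=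
  matEntropy (densityMatrix G)

/-- The star `K_{1,n-1}` on `Fin n`: the centre `0` is adjacent to all the other
`n - 1` vertices, and there are no other edges. -/
def starGraph (n : ℕ) : SimpleGraph (Fin n) where
  Adj i j := i ≠ j ∧ ((i : ℕ) = 0 ∨ (j : ℕ) = 0)
  symm := ⟨by intro i j h; exact ⟨h.1.symm, h.2.symm⟩⟩
  loopless := ⟨by intro i h; exact h.1 rfl⟩

instance (n : ℕ) : DecidableRel (starGraph n).Adj :=
  fun i j => inferInstanceAs (Decidable (i ≠ j ∧ ((i : ℕ) = 0 ∨ (j : ℕ) = 0)))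

/-!
The Laplacian of the star with `n` leaves has eigenvalues `0`, `1` and `n + 1` only, as the
eigenvector equations at the centre and at the leaves show. Instead of counting multiplicities,
note that `t ↦ t log₂ t` agrees on `{0, a, b}` with a quadratic polynomial vanishing at `0`, so
the entropy of `ρ` is determined by `tr ρ = 1` and `tr ρ² = (n + 3) / (4n)`. This gives
`S(K_{1,n}) = log₂ (2n) - (n + 1) / (2n) · log₂ (n + 1) = log₂ n / 2 + O(1)`.
-/

open Filter Topology

namespace Matrix.IsHermitian

variable {ι 𝕜 : Type*} [Fintype ι] [DecidableEq ι] [RCLike 𝕜] {A : Matrix ι ι 𝕜}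

lemma exists_mulVec_eq_eigenvalues_smul (hA : A.IsHermitian) (i : ι) :
    ∃ v ≠ 0, A *ᵥ v = hA.eigenvalues i • v :=
  ⟨_, (WithLp.ofLp_eq_zero 2).ne.2 <| hA.eigenvectorBasis.orthonormal.ne_zero i,
    hA.mulVec_eigenvectorBasis i⟩

lemma trace_cfc (hA : A.IsHermitian) (f : ℝ → ℝ) :
    (cfc f A).trace = ∑ i, (f (hA.eigenvalues i) : 𝕜) := by
  rw [hA.cfc_eq, IsHermitian.cfc, Unitary.conjStarAlgAut_apply, trace_mul_cycle,
    Unitary.coe_star_mul_self, one_mul, trace_diagonal]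
  rfl

lemma trace_sq (hA : A.IsHermitian) : (A ^ 2).trace = ∑ i, (hA.eigenvalues i : 𝕜) ^ 2 := by
  rw [← cfc_pow_id (R := ℝ) A 2 hA.isSelfAdjoint, hA.trace_cfc]
  push_cast
  rfl

end Matrix.IsHermitian

section Laplacian

variable {R : Type*} [Fintype V] [DecidableEq V] (G : SimpleGraph V) [DecidableRel G.Adj]

namespace SimpleGraph

lemma lapMatrix_apply_self [AddGroupWithOne R] (v : V) : G.lapMatrix R v v = G.degree v := by
  simp [lapMatrix, degMatrix]

lemma lapMatrix_apply_of_adj [AddGroupWithOne R] {u v : V} (h : G.Adj u v) :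
    G.lapMatrix R u v = -1 := by
  simp [lapMatrix, degMatrix, h.ne, h]

lemma trace_lapMatrix [AddCommGroupWithOne R] :
    (G.lapMatrix R).trace = ∑ v, (G.degree v : R) := by
  simp only [trace, Matrix.diag, lapMatrix_apply_self]

lemma trace_lapMatrix_sq [CommRing R] :
    ((G.lapMatrix R) ^ 2).trace = ∑ v, (G.degree v * (G.degree v + 1) : R) := by
  refine Finset.sum_congr rfl fun v _ => ?_
  have hcol : (G.lapMatrix R ^ 2) v v = (G.lapMatrix R *ᵥ fun u => G.lapMatrix R u v) v := by
    rw [sq, mul_apply]; rfl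
  have hneighbor : ∀ u ∈ G.neighborFinset v, G.lapMatrix R u v = -1 := fun u hu =>
    G.lapMatrix_apply_of_adj ((G.mem_neighborFinset v u).1 hu).symm
  rw [Matrix.diag_apply, hcol, lapMatrix_mulVec_apply, lapMatrix_apply_self,
    Finset.sum_congr rfl hneighbor, Finset.sum_const, card_neighborFinset_eq_degree]
  simp only [nsmul_eq_mul, mul_neg, mul_one, sub_neg_eq_add]
  ring

end SimpleGraph

lemma trace_densityMatrix (hG : degreeSum G ≠ 0) : (densityMatrix G).trace = 1 := by
  rw [densityMatrix, trace_smul, G.trace_lapMatrix, smul_eq_mul, degreeSum, Nat.cast_sum]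
  exact inv_mul_cancel₀ (by exact_mod_cast hG)

lemma isHermitian_densityMatrix : (densityMatrix G).IsHermitian :=
  (G.isHermitian_lapMatrix ℝ).smul (IsSelfAdjoint.all _)

end Laplacian

section Star

variable {n : ℕ}

lemma starGraph_adj_zero_iff {i : Fin (n + 1)} : (starGraph (n + 1)).Adj 0 i ↔ i ≠ 0 := by
  simp [starGraph, eq_comm]

lemma starGraph_adj_succ_iff {i : Fin n} {j : Fin (n + 1)} :
    (starGraph (n + 1)).Adj i.succ j ↔ j = 0 := by
  simp only [starGraph, Fin.val_eq_zero_iff, Fin.succ_ne_zero, false_or]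
  exact ⟨And.right, fun h => ⟨h ▸ Fin.succ_ne_zero i, h⟩⟩

lemma starGraph_neighborFinset_zero : (starGraph (n + 1)).neighborFinset 0 = univ.erase 0 := by
  ext i
  simp [starGraph_adj_zero_iff]

lemma starGraph_neighborFinset_succ (i : Fin n) :
    (starGraph (n + 1)).neighborFinset i.succ = {0} := by
  ext j
  simp [starGraph_adj_succ_iff]

lemma starGraph_degree_zero : (starGraph (n + 1)).degree 0 = n := by
  simp [← SimpleGraph.card_neighborFinset_eq_degree, starGraph_neighborFinset_zero]

lemma starGraph_degree_succ (i : Fin n) : (starGraph (n + 1)).degree i.succ = 1 := by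
  simp [← SimpleGraph.card_neighborFinset_eq_degree, starGraph_neighborFinset_succ]

lemma degreeSum_starGraph : degreeSum (starGraph (n + 1)) = 2 * n := by
  simp only [degreeSum, Fin.sum_univ_succ, starGraph_degree_zero, starGraph_degree_succ, sum_const,
    card_univ, Fintype.card_fin, smul_eq_mul, mul_one]
  ring

lemma lapMatrix_starGraph_mulVec_zero (v : Fin (n + 1) → ℝ) :
    ((starGraph (n + 1)).lapMatrix ℝ *ᵥ v) 0 = n * v 0 - ∑ i : Fin n, v i.succ := by
  rw [SimpleGraph.lapMatrix_mulVec_apply, starGraph_degree_zero, starGraph_neighborFinset_zero,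
    Finset.sum_erase_eq_sub (mem_univ 0), Fin.sum_univ_succ]
  ring

lemma lapMatrix_starGraph_mulVec_succ (v : Fin (n + 1) → ℝ) (i : Fin n) :
    ((starGraph (n + 1)).lapMatrix ℝ *ᵥ v) i.succ = v i.succ - v 0 := by
  simp [SimpleGraph.lapMatrix_mulVec_apply, starGraph_degree_succ, starGraph_neighborFinset_succ]

lemma eigenvalue_lapMatrix_starGraph {v : Fin (n + 1) → ℝ} {μ : ℝ} (hv : v ≠ 0)
    (hμ : (starGraph (n + 1)).lapMatrix ℝ *ᵥ v = μ • v) : μ = 0 ∨ μ = 1 ∨ μ = n + 1 := by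
  set s := ∑ i : Fin n, v i.succ
  have h0 : n * v 0 - s = μ * v 0 := by
    rw [← lapMatrix_starGraph_mulVec_zero, hμ, Pi.smul_apply, smul_eq_mul]
  have hsucc (i : Fin n) : v i.succ - v 0 = μ * v i.succ := by
    rw [← lapMatrix_starGraph_mulVec_succ, hμ, Pi.smul_apply, smul_eq_mul]
  have hsum : s - n * v 0 = μ * s := by
    simpa [Finset.sum_sub_distrib, ← Finset.mul_sum] using
      Finset.sum_congr (s₁ := univ) rfl fun i _ => hsucc i
  have htotal : μ * (v 0 + s) = 0 := by linear_combination -h0 - hsum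
  rcases mul_eq_zero.1 htotal with hμ0 | hs
  · exact Or.inl hμ0
  have hcentre : (n + 1 - μ) * v 0 = 0 := by linear_combination h0 + hs
  rcases mul_eq_zero.1 hcentre with hμn | hv0
  · exact Or.inr (Or.inr (by linarith))
  obtain ⟨j, hj⟩ := Function.ne_iff.1 hv
  cases j using Fin.cases with
  | zero => exact absurd hv0 hj
  | succ i =>
    refine Or.inr (Or.inl (mul_right_cancel₀ hj ?_))
    simpa [hv0] using (hsucc i).symm

end Star

/-- Lagrange interpolation of `f` on the nodes `0, a, b`. -/
lemma sum_comp_eq_of_forall_eq_zero_or_eq_or_eq {ι K : Type*} [Field K] (s : Finset ι)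
    (x : ι → K) (f : K → K) (hf : f 0 = 0) {a b : K} (ha : a ≠ 0) (hb : b ≠ 0) (hab : a ≠ b)
    (hx : ∀ i ∈ s, x i = 0 ∨ x i = a ∨ x i = b) :
    ∑ i ∈ s, f (x i) =
      (∑ i ∈ s, x i ^ 2 - b * ∑ i ∈ s, x i) * (f a / (a * (a - b))) +
        (∑ i ∈ s, x i ^ 2 - a * ∑ i ∈ s, x i) * (f b / (b * (b - a))) := by
  have hnode : ∀ i ∈ s, f (x i) = (x i ^ 2 - b * x i) * (f a / (a * (a - b))) +
      (x i ^ 2 - a * x i) * (f b / (b * (b - a))) := by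
    intro i hi
    rcases hx i hi with h | h | h <;> rw [h]
    · simp [hf]
    · field_simp; ring
    · field_simp; ring
  rw [Finset.sum_congr rfl hnode, Finset.sum_add_distrib, ← Finset.sum_mul, ← Finset.sum_mul,
    Finset.sum_sub_distrib, Finset.sum_sub_distrib, ← Finset.mul_sum, ← Finset.mul_sum]

section StarDensity

variable {n : ℕ}

lemma densityMatrix_starGraph :
    densityMatrix (starGraph (n + 1)) = (2 * n : ℝ)⁻¹ • (starGraph (n + 1)).lapMatrix ℝ := by
  rw [densityMatrix, degreeSum_starGraph]
  push_cast
  rfl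

lemma trace_sq_densityMatrix_starGraph (hn : n ≠ 0) :
    (densityMatrix (starGraph (n + 1)) ^ 2).trace = (n + 3) / (4 * n) := by
  rw [densityMatrix_starGraph, smul_pow, trace_smul, SimpleGraph.trace_lapMatrix_sq,
    Fin.sum_univ_succ]
  simp only [starGraph_degree_zero, starGraph_degree_succ, sum_const, card_univ, Fintype.card_fin,
    nsmul_eq_mul, smul_eq_mul]
  have hn' : (n : ℝ) ≠ 0 := Nat.cast_ne_zero.2 hn
  field_simp
  ring

lemma eigenvalues_densityMatrix_starGraph (hn : n ≠ 0)
    (hρ : (densityMatrix (starGraph (n + 1))).IsHermitian) (i : Fin (n + 1)) :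
    hρ.eigenvalues i = 0 ∨ hρ.eigenvalues i = (2 * n : ℝ)⁻¹ ∨
      hρ.eigenvalues i = (n + 1) * (2 * n : ℝ)⁻¹ := by
  obtain ⟨v, hv, hρv⟩ := hρ.exists_mulVec_eq_eigenvalues_smul i
  generalize hρ.eigenvalues i = μ at hρv ⊢
  have hn' : (2 * n : ℝ) ≠ 0 := by positivity
  have hLv : (starGraph (n + 1)).lapMatrix ℝ *ᵥ v = (2 * n * μ) • v := by
    rw [densityMatrix_starGraph, smul_mulVec] at hρv
    rw [mul_smul, ← hρv, smul_smul, mul_inv_cancel₀ hn', one_smul]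
  rcases eigenvalue_lapMatrix_starGraph hv hLv with h | h | h
  · exact Or.inl (by simpa [hn'] using h)
  · exact Or.inr (Or.inl (by field_simp; linarith))
  · exact Or.inr (Or.inr (by field_simp; linarith))

end StarDensity

lemma graphEntropy_starGraph {n : ℕ} (hn : n ≠ 0) :
    graphEntropy (starGraph (n + 1)) =
      Real.logb 2 (2 * n) - (n + 1) / (2 * n) * Real.logb 2 (n + 1) := by
  have hρ := isHermitian_densityMatrix (starGraph (n + 1))
  have hn' : (n : ℝ) ≠ 0 := Nat.cast_ne_zero.2 hn
  have hsum : ∑ i, hρ.eigenvalues i = 1 := by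
    simpa using (hρ.trace_eq_sum_eigenvalues).symm.trans (trace_densityMatrix _ (by
      rw [degreeSum_starGraph]; omega))
  have hsum_sq : ∑ i, hρ.eigenvalues i ^ 2 = (n + 3) / (4 * n) := by
    simpa using (hρ.trace_sq).symm.trans (trace_sq_densityMatrix_starGraph hn)
  have hnodes : (2 * n : ℝ)⁻¹ ≠ (n + 1) * (2 * n : ℝ)⁻¹ := by
    rw [ne_eq, eq_comm, mul_eq_right₀ (by positivity)]
    simpa using hn'
  rw [graphEntropy, matEntropy, dif_pos hρ,
    sum_comp_eq_of_forall_eq_zero_or_eq_or_eq _ _ (fun t => t * Real.logb 2 t) (by simp)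
      (by positivity) (by positivity) hnodes
      (fun i _ => eigenvalues_densityMatrix_starGraph hn hρ i), hsum, hsum_sq,
    Real.logb_mul (by positivity) (by positivity), Real.logb_inv]
  have hgap : (n + 1) * (2 * n : ℝ)⁻¹ - (2 * n : ℝ)⁻¹ = 2⁻¹ := by field_simp; ring
  have hgap' : (2 * n : ℝ)⁻¹ - (n + 1) * (2 * n : ℝ)⁻¹ = -2⁻¹ := by rw [← hgap, neg_sub]
  rw [hgap, hgap']
  field_simp
  ring

lemma tendsto_logb_two_mul_sub_div_logb :
    Tendsto (fun n : ℕ =>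
        (Real.logb 2 (2 * n) - (n + 1) / (2 * n) * Real.logb 2 (n + 1)) / Real.logb 2 n)
      atTop (𝓝 (1 / 2)) := by
  have hlog : Tendsto (fun n : ℕ => (Real.logb 2 n)⁻¹) atTop (𝓝 0) :=
    ((Real.tendsto_logb_atTop one_lt_two).comp tendsto_natCast_atTop_atTop).inv_tendsto_atTop
  have hratio : Tendsto (fun n : ℕ => (1 + 1 / (n : ℝ)) / 2) atTop (𝓝 (1 / 2)) := by
    simpa using ((tendsto_one_div_atTop_nhds_zero_nat (𝕜 := ℝ)).const_add 1).div_const 2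
  have hlim := (hlog.add_const 1).sub (hratio.mul
    ((Real.tendsto_logb_nat_add_one_sub_logb (b := 2)).mul hlog |>.const_add 1))
  rw [zero_add, zero_mul, add_zero, mul_one, show (1 : ℝ) - 1 / 2 = 1 / 2 by norm_num] at hlim
  refine hlim.congr' ?_
  filter_upwards [eventually_gt_atTop 1] with n hn
  have hn' : (1 : ℝ) < n := by exact_mod_cast hn
  have hL : Real.logb 2 n ≠ 0 := (Real.logb_pos one_lt_two hn').ne'
  rw [Real.logb_mul two_ne_zero (by positivity), Real.logb_self_eq_one one_lt_two]
  field_simp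
  ring

/-- `S(K_{1,n-1})/log₂(n-1) → 1/2` as `n → ∞`: the entropy of the
star is asymptotically half the entropy of the complete graph `Kₙ`. -/
theorem entropy_star_ratio_tendsto_half :
    Filter.Tendsto
      (fun n : ℕ => graphEntropy (starGraph n) / Real.logb 2 ((n : ℝ) - 1))
      Filter.atTop (nhds (1 / 2)) := by
  rw [← tendsto_add_atTop_iff_nat 1]
  refine tendsto_logb_two_mul_sub_div_logb.congr' ?_
  filter_upwards [eventually_ne_atTop 0] with n hn
  rw [graphEntropy_starGraph hn, Nat.cast_add_one, add_sub_cancel_right]
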